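/- Let (μ(t))_{t≥0} be a solution of the pure selection model such that supp(μ(0)) ∩ [𝔔]_R ≠ ∅. If q̆ ∈ Q satisfies q̆ ∉ [𝔔]_R (i.e., R(0,q̆) < R(0,𝔔)), then there exists δ = δ(q̆) > 0 such that μ(t)(B_δ(q̆)) → 0 as t → ∞, where B_δ(q̆) is the open ball of radius δ around q̆. -/

import Mathlib

open MeasureTheory Filter Set Topology

noncomputable section

/-- Birth and mortality rates `f₁`, `f₂` on `ℝ × Q` satisfying assumptions (A1)-(A2). -/
structure EGTRates (Q : Type*) [MetricSpace Q] where
  f₁ : ℝ → Q → ℝ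
  f₂ : ℝ → Q → ℝ
  f₁_nonneg : ∀ X q, 0 ≤ f₁ X q
  f₂_nonneg : ∀ X q, 0 ≤ f₂ X q
  f₁_lip : ∀ C : ℝ, ∃ L : ℝ, 0 ≤ L ∧ ∀ q : Q, ∀ X ∈ Set.Icc (-C) C, ∀ Y ∈ Set.Icc (-C) C,
    |f₁ X q - f₁ Y q| ≤ L * |X - Y|
  f₂_lip : ∀ C : ℝ, ∃ L : ℝ, 0 ≤ L ∧ ∀ q : Q, ∀ X ∈ Set.Icc (-C) C, ∀ Y ∈ Set.Icc (-C) C,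
    |f₂ X q - f₂ Y q| ≤ L * |X - Y|
  f₁_anti : ∀ q, AntitoneOn (fun X => f₁ X q) (Set.Ici 0)
  f₂_mono : ∀ q, MonotoneOn (fun X => f₂ X q) (Set.Ici 0)
  f₁_cont : ∀ X, Continuous fun q => f₁ X q
  f₂_cont : ∀ X, Continuous fun q => f₂ X q
  f₂_inf_pos : ∃ ϖ : ℝ, 0 < ϖ ∧ ∀ q, ϖ ≤ f₂ 0 q

namespace EGTRates

variable {Q : Type*} [MetricSpace Q]

/-- The reproductive number `R(X,q) = f₁(X,q)/f₂(X,q)`. -/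
def R (M : EGTRates Q) (X : ℝ) (q : Q) : ℝ := M.f₁ X q / M.f₂ X q

/-- The carrying capacity `K(q)`. -/
def carCap (M : EGTRates Q) (q : Q) : ℝ :=
  if 1 ≤ M.R 0 q then sInf {K : ℝ | 0 ≤ K ∧ M.R K q ≤ 1} else 0

/-- Assumptions (A3)-(A5) relative to a fittest strategy `𝔔` and a least fit strategy `𝔮`. -/
def Assumptions (M : EGTRates Q) (𝔔 𝔮 : Q) : Prop :=
  (∀ q, M.R 0 q ≤ M.R 0 𝔔) ∧ (∀ q, M.R 0 𝔮 ≤ M.R 0 q) ∧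
  (∃ X, 0 ≤ X ∧ M.R X 𝔔 ≤ 1) ∧
  (∀ q qq : Q, ∀ Y : ℝ, 0 ≤ Y →
      (M.R 0 qq < M.R 0 q → M.R Y qq < M.R Y q) ∧
      (M.R 0 q = M.R 0 qq → M.R Y q = M.R Y qq)) ∧
  (1 ≤ M.R 0 𝔔 → M.R (M.carCap 𝔔) 𝔔 = 1 ∧ ∀ x, 0 ≤ x → M.R x 𝔔 = 1 → x = M.carCap 𝔔) ∧
  (1 ≤ M.R 0 𝔮 → M.R (M.carCap 𝔮) 𝔮 = 1 ∧ ∀ x, 0 ≤ x → M.R x 𝔮 = 1 → x = M.carCap 𝔮)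

/-- The class of fittest strategies `[𝔔]_R`. -/
def fittestClass (M : EGTRates Q) (𝔔 : Q) : Set Q := {q | M.R 0 q = M.R 0 𝔔}

end EGTRates

/-- Support of a Borel measure: points all of whose neighborhoods have positive measure. -/
def msupport {Q : Type*} [MetricSpace Q] [MeasurableSpace Q] (μ : Measure Q) : Set Q :=
  {q | ∀ ε : ℝ, 0 < ε → 0 < μ (Metric.ball q ε)}

/-- A solution of the full selection–mutation model with mutation kernel `γ`. -/
def IsSelMutSolution {Q : Type*} [MetricSpace Q] [MeasurableSpace Q] [BorelSpace Q]
    (M : EGTRates Q) (γ : Q → ProbabilityMeasure Q) (μ : ℝ → Measure Q) : Prop :=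
  (∀ t, IsFiniteMeasure (μ t)) ∧
  ∀ t ∈ Set.Ici (0:ℝ), ∀ E : Set Q, MeasurableSet E →
    HasDerivWithinAt (fun s => (μ s E).toReal)
      ((∫ qq, M.f₁ (μ t Set.univ).toReal qq * ((γ qq : Measure Q) E).toReal ∂(μ t)) -
        ∫ qq in E, M.f₂ (μ t Set.univ).toReal qq ∂(μ t)) (Set.Ici 0) t

/-- A solution of the pure selection (replicator) model. -/
def IsPureSelectionSolution {Q : Type*} [MetricSpace Q] [MeasurableSpace Q] [BorelSpace Q]
    (M : EGTRates Q) (μ : ℝ → Measure Q) : Prop :=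
  (∀ t, IsFiniteMeasure (μ t)) ∧
  ∀ t ∈ Set.Ici (0:ℝ), ∀ E : Set Q, MeasurableSet E →
    HasDerivWithinAt (fun s => (μ s E).toReal)
      (∫ q in E, (M.f₁ (μ t Set.univ).toReal q - M.f₂ (μ t Set.univ).toReal q) ∂(μ t))
      (Set.Ici 0) t

/-!
Write `h(X, q) = f₁(X, q) - f₂(X, q)` and `X(t) = μ(t)(Q)`. Above any level `Y > K_𝔔` every
strategy declines, so `X(t)` stays bounded and eventually drops below `Y`; hence the mass of every
ball `A` around a fittest strategy `p` in the support of `μ(0)` stays positive.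

If `R(0, 𝔔) < 1`, the rate is negative near `q̆` at every population size, and the mass near `q̆`
decays exponentially. Otherwise, for some `Y > K_𝔔`, small balls `A` around `p` and `B` around
`q̆`, and constants `θ ≥ 0`, `c > 0`, the rate on `B` is at most `θ s(X) - c` for `X ≤ Y`, where
`s(X)` bounds the rate on `A` from below: for `X` well below `K_𝔔` because `p` grows strictly
there, near `K_𝔔` because `R(K_𝔔, q̆) < R(K_𝔔, 𝔔) = 1`. Then `μ(t)(B) e^{ct} / μ(t)(A)^θ` is
eventually nonincreasing, and as `μ(t)(A) ≤ Y` this forces `μ(t)(B) → 0`.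
-/

theorem monotoneOn_Ici_of_hasDerivWithinAt_nonneg {f f' : ℝ → ℝ} {a : ℝ}
    (hf : ∀ t ∈ Ici a, HasDerivWithinAt f (f' t) (Ici a) t) (hf' : ∀ t > a, 0 ≤ f' t) :
    MonotoneOn f (Ici a) :=
  monotoneOn_of_hasDerivWithinAt_nonneg (convex_Ici a) (fun t ht => (hf t ht).continuousWithinAt)
    (fun t ht => (hf t (interior_subset ht)).mono interior_subset) (by simpa using hf')

theorem antitoneOn_Ici_of_hasDerivWithinAt_nonpos {f f' : ℝ → ℝ} {a : ℝ}
    (hf : ∀ t ∈ Ici a, HasDerivWithinAt f (f' t) (Ici a) t) (hf' : ∀ t > a, f' t ≤ 0) :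
    AntitoneOn f (Ici a) :=
  antitoneOn_of_hasDerivWithinAt_nonpos (convex_Ici a) (fun t ht => (hf t ht).continuousWithinAt)
    (fun t ht => (hf t (interior_subset ht)).mono interior_subset) (by simpa using hf')

section Barrier

variable {X X' : ℝ → ℝ} {a b : ℝ}

theorem le_max_of_hasDerivWithinAt_neg (hX : ∀ t ∈ Ici a, HasDerivWithinAt X (X' t) (Ici a) t)
    (hX' : ∀ t ≥ a, b ≤ X t → X' t < 0) {t : ℝ} (ht : a ≤ t) : X t ≤ max (X a) b :=
  image_le_of_deriv_right_lt_deriv_boundary (B := fun _ => max (X a) b) (B' := 0)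
    (fun s hs => (hX s hs.1).continuousWithinAt.mono fun _ hr => hr.1)
    (fun s hs => (hX s hs.1).mono (Ici_subset_Ici.2 hs.1)) (le_max_left _ _)
    (fun _ => hasDerivAt_const _ _)
    (fun s hs hXs => hX' s hs.1 (hXs ▸ le_max_right _ _)) ⟨ht, le_rfl⟩

theorem exists_le_of_hasDerivWithinAt_le_neg {r : ℝ} (hr : 0 < r)
    (hX : ∀ t ∈ Ici a, HasDerivWithinAt X (X' t) (Ici a) t)
    (hX' : ∀ t ≥ a, b ≤ X t → X' t ≤ -r) : ∃ t ≥ a, X t ≤ b := by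
  by_contra! hgt
  -- `X t + r t` is antitone as long as `X` stays above `b`, which it cannot do forever
  have hanti : AntitoneOn (fun t => X t + r * t) (Ici a) :=
    antitoneOn_Ici_of_hasDerivWithinAt_nonpos
      (fun t ht => (hX t ht).add ((hasDerivWithinAt_id t _).const_mul r))
      (fun t ht => by have := hX' t ht.le (hgt t ht.le).le; simp only [mul_one]; linarith)
  have hd : 0 ≤ (X a - b) / r := div_nonneg (sub_nonneg.2 (hgt a le_rfl).le) hr.le
  have hT : a ≤ a + (X a - b) / r + 1 := by linarith
  have hXT := hanti self_mem_Ici hT hT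
  have hrd : r * ((X a - b) / r) = X a - b := mul_div_cancel₀ _ hr.ne'
  simp only [mul_add, mul_one, hrd] at hXT
  linarith [hgt _ hT]

theorem eventually_le_of_hasDerivWithinAt_le_neg {r : ℝ} (hr : 0 < r)
    (hX : ∀ t ∈ Ici a, HasDerivWithinAt X (X' t) (Ici a) t)
    (hX' : ∀ t ≥ a, b ≤ X t → X' t ≤ -r) : ∀ᶠ t in atTop, X t ≤ b := by
  obtain ⟨T, hT, hXT⟩ := exists_le_of_hasDerivWithinAt_le_neg hr hX hX'
  filter_upwards [eventually_ge_atTop T] with t ht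
  have hXT' : ∀ s ∈ Ici T, HasDerivWithinAt X (X' s) (Ici T) s := fun s hs =>
    (hX s (hT.trans hs)).mono (Ici_subset_Ici.2 hT)
  simpa [hXT] using le_max_of_hasDerivWithinAt_neg hXT'
    (fun s hs hXs => (hX' s (hT.trans hs) hXs).trans_lt (neg_neg_of_pos hr)) ht

end Barrier

theorem pos_of_hasDerivWithinAt_ge_neg_mul {a a' : ℝ → ℝ} {t₀ Λ : ℝ}
    (ha : ∀ t ∈ Ici t₀, HasDerivWithinAt a (a' t) (Ici t₀) t)
    (ha' : ∀ t ≥ t₀, -Λ * a t ≤ a' t) (h0 : 0 < a t₀) {t : ℝ} (ht : t₀ ≤ t) : 0 < a t := by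
  have hmono : MonotoneOn (fun s => a s * Real.exp (Λ * s)) (Ici t₀) :=
    monotoneOn_Ici_of_hasDerivWithinAt_nonneg
      (fun s hs => (ha s hs).mul ((hasDerivWithinAt_id s _).const_mul Λ).exp)
      (fun s hs => by
        have := mul_le_mul_of_nonneg_right (ha' s hs.le) (Real.exp_pos (Λ * s)).le
        simp only [id]
        linarith)
  have hle : a t₀ * Real.exp (Λ * t₀) ≤ a t * Real.exp (Λ * t) := hmono self_mem_Ici ht ht
  exact (mul_pos_iff_of_pos_right (Real.exp_pos _)).1 ((mul_pos h0 (Real.exp_pos _)).trans_le hle)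

theorem tendsto_zero_of_hasDerivWithinAt_le_mul {g g' a a' σ : ℝ → ℝ} {T θ c C : ℝ}
    (hθ : 0 ≤ θ) (hc : 0 < c)
    (hg : ∀ t ∈ Ici T, HasDerivWithinAt g (g' t) (Ici T) t)
    (ha : ∀ t ∈ Ici T, HasDerivWithinAt a (a' t) (Ici T) t)
    (hg0 : ∀ t ≥ T, 0 ≤ g t) (ha0 : ∀ t ≥ T, 0 < a t) (haC : ∀ t ≥ T, a t ≤ C)
    (hg' : ∀ t ≥ T, g' t ≤ (θ * σ t - c) * g t) (ha' : ∀ t ≥ T, σ t * a t ≤ a' t) :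
    Tendsto g atTop (𝓝 0) := by
  -- the weight `e^{ct} / a^θ` turns the two differential inequalities into monotonicity
  set w : ℝ → ℝ := fun t => c * t - θ * Real.log (a t)
  have hanti : AntitoneOn (fun t => g t * Real.exp (w t)) (Ici T) :=
    antitoneOn_Ici_of_hasDerivWithinAt_nonpos
      (fun t ht => (hg t ht).mul ((((hasDerivWithinAt_id t _).const_mul c).sub
        (((ha t ht).log (ha0 t ht).ne').const_mul θ)).exp))
      (fun t ht => by
        have hσ : σ t ≤ a' t / a t := (le_div_iff₀ (ha0 t ht.le)).2 (ha' t ht.le)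
        have := mul_le_mul_of_nonneg_left hσ (mul_nonneg hθ (hg0 t ht.le))
        have hdecay : g' t + g t * (c * 1 - θ * (a' t / a t)) ≤ 0 := by
          linarith [hg' t ht.le]
        have := mul_nonpos_of_nonpos_of_nonneg hdecay (Real.exp_pos (w t)).le
        simp only [Pi.sub_apply, id, w] at this ⊢
        linarith)
  have hbound : ∀ t ≥ T,
      g t ≤ g T * Real.exp (w T) * Real.exp (θ * Real.log C) * Real.exp (-(c * t)) := by
    intro t ht
    have hlog : θ * Real.log (a t) ≤ θ * Real.log C :=
      mul_le_mul_of_nonneg_left (Real.log_le_log (ha0 t ht) (haC t ht)) hθ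
    calc g t = g t * Real.exp (w t) * Real.exp (-w t) := by
          rw [mul_assoc, ← Real.exp_add, add_neg_cancel, Real.exp_zero, mul_one]
      _ ≤ g T * Real.exp (w T) * Real.exp (θ * Real.log C + -(c * t)) :=
          mul_le_mul (hanti self_mem_Ici ht ht)
            (Real.exp_le_exp.2 (by simp only [w]; linarith)) (Real.exp_pos _).le
            (mul_nonneg (hg0 T le_rfl) (Real.exp_pos _).le)
      _ = g T * Real.exp (w T) * Real.exp (θ * Real.log C) * Real.exp (-(c * t)) := by
          rw [Real.exp_add]; ring
  have hlim : Tendsto (fun t => g T * Real.exp (w T) * Real.exp (θ * Real.log C) *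
      Real.exp (-(c * t))) atTop (𝓝 0) := by
    simpa using (Real.tendsto_exp_atBot.comp (tendsto_neg_atTop_atBot.comp
      (tendsto_id.const_mul_atTop hc))).const_mul
        (g T * Real.exp (w T) * Real.exp (θ * Real.log C))
  exact squeeze_zero' ((eventually_ge_atTop T).mono hg0) ((eventually_ge_atTop T).mono hbound)
    hlim

theorem continuous_uncurry_of_lipschitz_left {Q : Type*} [TopologicalSpace Q]
    {f : ℝ → Q → ℝ}
    (hlip : ∀ C : ℝ, ∃ L : ℝ, 0 ≤ L ∧ ∀ q : Q, ∀ X ∈ Icc (-C) C, ∀ Y ∈ Icc (-C) C,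
      |f X q - f Y q| ≤ L * |X - Y|)
    (hcont : ∀ X, Continuous (f X)) : Continuous (Function.uncurry f) := by
  refine continuous_iff_continuousAt.2 fun P => ?_
  obtain ⟨L, hL, hlipL⟩ := hlip (|P.1| + 1)
  have hon : ContinuousOn (Function.uncurry f) (Icc (-(|P.1| + 1)) (|P.1| + 1) ×ˢ univ) :=
    continuousOn_prod_of_continuousOn_lipschitzOnWith (Function.uncurry f) (Real.toNNReal L)
      (fun X _ => (hcont X).continuousOn)
      (fun q _ => LipschitzOnWith.of_dist_le_mul fun X hX Y hY => by
        simpa [Real.dist_eq, Real.coe_toNNReal _ hL] using hlipL q X hX Y hY)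
  refine hon.continuousAt (prod_mem_nhds (Icc_mem_nhds ?_ ?_) univ_mem) <;>
    linarith [neg_abs_le P.1, le_abs_self P.1]

theorem exists_forall_dist_lt_of_isCompact {X Q : Type*} [TopologicalSpace X]
    [PseudoMetricSpace Q] {h : X → Q → ℝ} (hh : Continuous (Function.uncurry h)) {k : Set X}
    (hk : IsCompact k) (p : Q) {κ : ℝ} (hκ : 0 < κ) :
    ∃ δ > 0, ∀ x ∈ k, ∀ q ∈ Metric.ball p δ, dist (h x q) (h x p) < κ := by
  obtain ⟨v, hv, hvk⟩ := hk.mem_uniformity_of_prod (f := fun q x => h x q) (s := univ)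
    (hh.comp continuous_swap).continuousOn (mem_univ p) (Metric.dist_mem_uniformity hκ)
  rw [nhdsWithin_univ, Metric.mem_nhds_iff] at hv
  obtain ⟨δ, hδ, hball⟩ := hv
  exact ⟨δ, hδ, fun x hx q hq => hvk q (hball hq) x hx⟩

theorem exists_le_mul_sub_of_pos_of_neg {Q : Type*} [MetricSpace Q] [CompactSpace Q]
    {h : ℝ → Q → ℝ} (hh : Continuous (Function.uncurry h)) {p qb : Q} {K : ℝ}
    (hpos : ∀ x ∈ Ico 0 K, 0 < h x p) (hK : 0 ≤ h K p) (hqb : h K qb < 0) :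
    ∃ Y, K < Y ∧ ∃ δ > 0, ∃ θ ≥ 0, ∃ c > 0,
      ∀ x ∈ Icc 0 Y, ∀ q ∈ Metric.ball qb δ, h x q ≤ θ * h x p - c := by
  have hcont_p : Continuous fun x => h x p := hh.comp (continuous_id.prodMk continuous_const)
  obtain ⟨c, hc, hqbc⟩ : ∃ c > 0, h K qb < -3 * c := ⟨-h K qb / 4, by linarith, by linarith⟩
  obtain ⟨ε, hε, hnear⟩ :
      ∃ ε > 0, ∀ P ∈ Metric.ball (K, qb) ε, Function.uncurry h P < -3 * c :=
    Metric.eventually_nhds_iff_ball.1 (hh.continuousAt.eventually_lt continuousAt_const hqbc)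
  obtain ⟨m, hm, hpm⟩ : ∃ m > 0, ∀ x ∈ Icc 0 (K - ε / 2), m ≤ h x p :=
    isCompact_Icc.exists_forall_le' hcont_p.continuousOn
      fun x hx => hpos x ⟨hx.1, by linarith [hx.2]⟩
  obtain ⟨C, hC⟩ : ∃ C, ∀ x ∈ Icc 0 K, ∀ q, h x q ≤ C := by
    obtain ⟨C, hC⟩ := (isCompact_Icc.prod isCompact_univ).bddAbove_image hh.continuousOn
    exact ⟨C, fun x hx q => hC ⟨(x, q), ⟨hx, mem_univ q⟩, rfl⟩⟩
  -- On `[0, K - ε/2]` the rate at `p` is at least `m > 0`, so a large `θ` beats any rate at `q`;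
  -- on `(K - ε/2, Y]` the rate near `qb` is below `-3c` while `θ h x p ≥ -2c`.
  set θ := (max C 0 + c) / m
  have hθ : 0 ≤ θ := by positivity
  have hθm : θ * m = max C 0 + c := div_mul_cancel₀ _ hm.ne'
  obtain ⟨ε', hε', hright⟩ : ∃ ε' > 0, ∀ x ∈ Metric.ball K ε', -2 * c < θ * h x p :=
    Metric.eventually_nhds_iff_ball.1 (continuousAt_const.eventually_lt
      (continuous_const.mul hcont_p).continuousAt (by nlinarith))
  refine ⟨K + min (ε / 2) (ε' / 2), lt_add_of_pos_right _ (by positivity), ε, hε, θ, hθ, c, hc,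
    fun x hx q hq => ?_⟩
  have hmin := min_le_left (ε / 2) (ε' / 2)
  have hmin' := min_le_right (ε / 2) (ε' / 2)
  rcases le_or_gt x (K - ε / 2) with hxI | hxII
  · have := mul_le_mul_of_nonneg_left (hpm x ⟨hx.1, hxI⟩) hθ
    linarith [hC x ⟨hx.1, by linarith⟩ q, le_max_left C 0]
  · have hq3 : h x q < -3 * c := hnear (x, q) <| by
      rw [← ball_prod_same]
      refine ⟨?_, hq⟩
      rw [Metric.mem_ball, Real.dist_eq, abs_lt]
      constructor <;> linarith [hx.2]
    have hp2 : -2 * c ≤ θ * h x p := by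
      rcases lt_or_ge x K with hxK | hxK
      · nlinarith [hpos x ⟨hx.1, hxK⟩]
      · refine (hright x ?_).le
        rw [Metric.mem_ball, Real.dist_eq, abs_lt]
        constructor <;> linarith [hx.2]
    linarith

theorem exists_le_sub_and_le_mul_sub_of_pos_of_neg {Q : Type*} [MetricSpace Q]
    [CompactSpace Q] {h : ℝ → Q → ℝ} (hh : Continuous (Function.uncurry h)) {p qb : Q} {K : ℝ}
    (hpos : ∀ x ∈ Ico 0 K, 0 < h x p) (hK : 0 ≤ h K p) (hqb : h K qb < 0) :
    ∃ Y, K < Y ∧ ∃ δA > 0, ∃ δB > 0, ∃ θ ≥ 0, ∃ c > 0, ∃ s : ℝ → ℝ,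
      (∀ x ∈ Icc 0 Y, ∀ q ∈ Metric.ball p δA, s x ≤ h x q) ∧
      (∀ x ∈ Icc 0 Y, ∀ q ∈ Metric.ball qb δB, h x q ≤ θ * s x - c) := by
  obtain ⟨Y, hKY, δB, hδB, θ, hθ, c, hc, hdom⟩ :=
    exists_le_mul_sub_of_pos_of_neg hh hpos hK hqb
  set κ := c / 2 / (θ + 1)
  have hθκ : θ * κ ≤ c / 2 := by
    rw [← mul_div_assoc, div_le_iff₀ (by positivity)]
    nlinarith
  obtain ⟨δA, hδA, hnear⟩ := exists_forall_dist_lt_of_isCompact hh isCompact_Icc p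
    (show 0 < κ by positivity)
  refine ⟨Y, hKY, δA, hδA, δB, hδB, θ, hθ, c / 2, half_pos hc, fun x => h x p - κ,
    fun x hx q hq => ?_, fun x hx q hq => ?_⟩
  · have := hnear x hx q hq
    rw [Real.dist_eq, abs_lt] at this
    linarith
  · linarith [hdom x hx q hq]

theorem setIntegral_le_of_le_const_real {X : Type*} [MeasurableSpace X] {μ : Measure X}
    {f : X → ℝ} {c : ℝ} {s : Set X} (hs : MeasurableSet s) (hμs : μ s ≠ ⊤)
    (hf : ∀ x ∈ s, f x ≤ c) (hfint : IntegrableOn f s μ) :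
    ∫ x in s, f x ∂μ ≤ c * μ.real s := by
  have := setIntegral_ge_of_const_le_real hs hμs (fun x hx => neg_le_neg (hf x hx)) hfint.neg
  rw [integral_neg] at this
  linarith

namespace EGTRates

variable {Q : Type*} [MetricSpace Q] (M : EGTRates Q)

def netGrowth (X : ℝ) (q : Q) : ℝ := M.f₁ X q - M.f₂ X q

theorem f₂_pos {X : ℝ} (hX : 0 ≤ X) (q : Q) : 0 < M.f₂ X q := by
  obtain ⟨ϖ, hϖ, hϖle⟩ := M.f₂_inf_pos
  exact hϖ.trans_le ((hϖle q).trans (M.f₂_mono q self_mem_Ici hX hX))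

theorem netGrowth_neg_iff {X : ℝ} (hX : 0 ≤ X) {q : Q} :
    M.netGrowth X q < 0 ↔ M.R X q < 1 := by
  rw [netGrowth, R, div_lt_one (M.f₂_pos hX q), sub_neg]

theorem netGrowth_pos_iff {X : ℝ} (hX : 0 ≤ X) {q : Q} :
    0 < M.netGrowth X q ↔ 1 < M.R X q := by
  rw [netGrowth, R, one_lt_div (M.f₂_pos hX q), sub_pos]

theorem R_antitoneOn (q : Q) : AntitoneOn (fun X => M.R X q) (Ici 0) := fun _ hx _ hy hxy =>
  div_le_div₀ (M.f₁_nonneg _ q) (M.f₁_anti q hx hy hxy) (M.f₂_pos hx q) (M.f₂_mono q hx hy hxy)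

theorem netGrowth_antitoneOn (q : Q) : AntitoneOn (fun X => M.netGrowth X q) (Ici 0) :=
  fun _ hx _ hy hxy => sub_le_sub (M.f₁_anti q hx hy hxy) (M.f₂_mono q hx hy hxy)

theorem continuous_netGrowth : Continuous (Function.uncurry M.netGrowth) :=
  (continuous_uncurry_of_lipschitz_left M.f₁_lip M.f₁_cont).sub
    (continuous_uncurry_of_lipschitz_left M.f₂_lip M.f₂_cont)

theorem continuous_netGrowth_apply (X : ℝ) : Continuous (M.netGrowth X) :=
  (M.f₁_cont X).sub (M.f₂_cont X)

theorem exists_le_netGrowth [CompactSpace Q] (Y : ℝ) :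
    ∃ Λ, ∀ x ∈ Icc 0 Y, ∀ q, Λ ≤ M.netGrowth x q := by
  obtain ⟨Λ, hΛ⟩ := (isCompact_Icc.prod isCompact_univ).bddBelow_image
    M.continuous_netGrowth.continuousOn
  exact ⟨Λ, fun x hx q => hΛ ⟨(x, q), ⟨hx, mem_univ q⟩, rfl⟩⟩

theorem integrable_netGrowth [CompactSpace Q] [MeasurableSpace Q] [OpensMeasurableSpace Q]
    (ν : Measure Q) [IsFiniteMeasure ν] (X : ℝ) : Integrable (M.netGrowth X) ν :=
  integrableOn_univ.1 <| (M.continuous_netGrowth_apply X).continuousOn.integrableOn_compact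
    isCompact_univ

theorem carCap_nonneg (q : Q) : 0 ≤ M.carCap q := by
  unfold carCap
  split_ifs
  exacts [Real.sInf_nonneg fun _ hK => hK.1, le_rfl]

namespace Assumptions

variable {M} {𝔔 𝔮 : Q}

theorem R_le (hA : M.Assumptions 𝔔 𝔮) {Y : ℝ} (hY : 0 ≤ Y) (q : Q) : M.R Y q ≤ M.R Y 𝔔 := by
  rcases (hA.1 q).lt_or_eq with hlt | heq
  exacts [((hA.2.2.2.1 𝔔 q Y hY).1 hlt).le, ((hA.2.2.2.1 q 𝔔 Y hY).2 heq).le]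

theorem R_eq_of_mem_fittestClass (hA : M.Assumptions 𝔔 𝔮) {q : Q}
    (hq : q ∈ M.fittestClass 𝔔) {Y : ℝ} (hY : 0 ≤ Y) : M.R Y q = M.R Y 𝔔 :=
  (hA.2.2.2.1 q 𝔔 Y hY).2 hq

theorem R_lt_of_notMem_fittestClass (hA : M.Assumptions 𝔔 𝔮) {q : Q}
    (hq : q ∉ M.fittestClass 𝔔) {Y : ℝ} (hY : 0 ≤ Y) : M.R Y q < M.R Y 𝔔 :=
  (hA.2.2.2.1 𝔔 q Y hY).1 ((hA.1 q).lt_of_ne hq)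

theorem R_lt_one_of_carCap_lt (hA : M.Assumptions 𝔔 𝔮) {Y : ℝ} (hY : M.carCap 𝔔 < Y) :
    M.R Y 𝔔 < 1 := by
  have hY0 : 0 ≤ Y := (M.carCap_nonneg 𝔔).trans hY.le
  by_cases h1 : 1 ≤ M.R 0 𝔔
  · obtain ⟨hK, huniq⟩ := hA.2.2.2.2.1 h1
    exact lt_of_le_of_ne (hK ▸ M.R_antitoneOn 𝔔 (M.carCap_nonneg 𝔔) hY0 hY.le)
      fun h => hY.ne' (huniq Y hY0 h)
  · exact (M.R_antitoneOn 𝔔 self_mem_Ici hY0 hY0).trans_lt (not_le.1 h1)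

theorem one_lt_R_of_lt_carCap (hA : M.Assumptions 𝔔 𝔮) {x : ℝ} (hx : 0 ≤ x)
    (hxK : x < M.carCap 𝔔) : 1 < M.R x 𝔔 := by
  have h1 : 1 ≤ M.R 0 𝔔 := by
    by_contra h
    simp only [carCap, h, if_false] at hxK
    linarith
  obtain ⟨hK, huniq⟩ := hA.2.2.2.2.1 h1
  exact lt_of_le_of_ne (hK ▸ M.R_antitoneOn 𝔔 hx (M.carCap_nonneg 𝔔) hxK.le)
    fun h => hxK.ne (huniq x hx h.symm)

theorem netGrowth_neg_of_carCap_lt (hA : M.Assumptions 𝔔 𝔮) {Y : ℝ} (hY : M.carCap 𝔔 < Y)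
    (q : Q) : M.netGrowth Y q < 0 :=
  have hY0 : 0 ≤ Y := (M.carCap_nonneg 𝔔).trans hY.le
  (M.netGrowth_neg_iff hY0).2 ((hA.R_le hY0 q).trans_lt (hA.R_lt_one_of_carCap_lt hY))

theorem exists_le_sub_and_le_mul_sub [CompactSpace Q] (hA : M.Assumptions 𝔔 𝔮)
    (h1 : 1 ≤ M.R 0 𝔔) {p qb : Q} (hp : p ∈ M.fittestClass 𝔔) (hqb : qb ∉ M.fittestClass 𝔔) :
    ∃ Y, M.carCap 𝔔 < Y ∧ ∃ δA > 0, ∃ δB > 0, ∃ θ ≥ 0, ∃ c > 0, ∃ s : ℝ → ℝ,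
      (∀ x ∈ Icc 0 Y, ∀ q ∈ Metric.ball p δA, s x ≤ M.netGrowth x q) ∧
      (∀ x ∈ Icc 0 Y, ∀ q ∈ Metric.ball qb δB, M.netGrowth x q ≤ θ * s x - c) := by
  have hK := M.carCap_nonneg 𝔔
  have hRK : M.R (M.carCap 𝔔) 𝔔 = 1 := (hA.2.2.2.2.1 h1).1
  refine exists_le_sub_and_le_mul_sub_of_pos_of_neg M.continuous_netGrowth
    (fun x hx => (M.netGrowth_pos_iff hx.1).2
      (hA.R_eq_of_mem_fittestClass hp hx.1 ▸ hA.one_lt_R_of_lt_carCap hx.1 hx.2))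
    ?_ ((M.netGrowth_neg_iff hK).2 (hRK ▸ hA.R_lt_of_notMem_fittestClass hqb hK))
  rw [← not_lt, M.netGrowth_neg_iff hK, hA.R_eq_of_mem_fittestClass hp hK, hRK]
  exact lt_irrefl 1

end Assumptions

end EGTRates

namespace IsPureSelectionSolution

variable {Q : Type*} [MetricSpace Q] [CompactSpace Q] [MeasurableSpace Q] [BorelSpace Q]
  {M : EGTRates Q} {μ : ℝ → Measure Q}

theorem exists_integral_netGrowth_le_neg (hμ : IsPureSelectionSolution M μ) {Y : ℝ}
    (hY : 0 < Y) (hneg : ∀ q, M.netGrowth Y q < 0) :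
    ∃ r > 0, ∀ t ≥ 0, Y ≤ (μ t univ).toReal →
      ∫ q in univ, M.netGrowth (μ t univ).toReal q ∂μ t ≤ -r := by
  obtain ⟨m, hm, hmle⟩ := isCompact_univ.exists_forall_le' (f := fun q => -M.netGrowth Y q)
    (M.continuous_netGrowth_apply Y).neg.continuousOn fun q _ => neg_pos.2 (hneg q)
  refine ⟨m * Y, mul_pos hm hY, fun t _ hYt => ?_⟩
  have := hμ.1 t
  have hle : ∀ q ∈ univ, M.netGrowth (μ t univ).toReal q ≤ -m := fun q hq =>
    (M.netGrowth_antitoneOn q hY.le (hY.le.trans hYt) hYt).trans (le_neg.1 (hmle q hq))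
  have := setIntegral_le_of_le_const_real (μ := μ t) MeasurableSet.univ (measure_ne_top _ _)
    hle (M.integrable_netGrowth _ _).integrableOn
  have : m * Y ≤ m * (μ t).real univ := mul_le_mul_of_nonneg_left hYt hm.le
  linarith

theorem totalMass_le_max (hμ : IsPureSelectionSolution M μ) {Y : ℝ} (hY : 0 < Y)
    (hneg : ∀ q, M.netGrowth Y q < 0) {t : ℝ} (ht : 0 ≤ t) :
    (μ t univ).toReal ≤ max (μ 0 univ).toReal Y := by
  obtain ⟨r, hr, hder⟩ := hμ.exists_integral_netGrowth_le_neg hY hneg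
  exact le_max_of_hasDerivWithinAt_neg (fun s hs => hμ.2 s hs univ MeasurableSet.univ)
    (fun s hs hYs => (hder s hs hYs).trans_lt (neg_neg_of_pos hr)) ht

theorem eventually_totalMass_le (hμ : IsPureSelectionSolution M μ) {Y : ℝ} (hY : 0 < Y)
    (hneg : ∀ q, M.netGrowth Y q < 0) : ∀ᶠ t in atTop, (μ t univ).toReal ≤ Y := by
  obtain ⟨r, hr, hder⟩ := hμ.exists_integral_netGrowth_le_neg hY hneg
  exact eventually_le_of_hasDerivWithinAt_le_neg hr
    (fun s hs => hμ.2 s hs univ MeasurableSet.univ) hder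

theorem measure_toReal_pos (hμ : IsPureSelectionSolution M μ) {Y : ℝ} (hY : 0 < Y)
    (hneg : ∀ q, M.netGrowth Y q < 0) {E : Set Q} (hE : MeasurableSet E) (h0 : 0 < μ 0 E)
    {t : ℝ} (ht : 0 ≤ t) : 0 < (μ t E).toReal := by
  obtain ⟨Λ, hΛ⟩ := M.exists_le_netGrowth (max (μ 0 univ).toReal Y)
  have := hμ.1 0
  refine pos_of_hasDerivWithinAt_ge_neg_mul (Λ := -Λ) (fun s hs => hμ.2 s hs E hE)
    (fun s hs => ?_) (ENNReal.toReal_pos h0.ne' (measure_ne_top _ _)) ht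
  have := hμ.1 s
  rw [neg_neg]
  exact setIntegral_ge_of_const_le_real hE (measure_ne_top _ _)
    (fun q _ => hΛ _ ⟨ENNReal.toReal_nonneg, hμ.totalMass_le_max hY hneg hs⟩ q)
    (M.integrable_netGrowth _ _).integrableOn

theorem tendsto_measure_zero_of_le_mul_sub (hμ : IsPureSelectionSolution M μ) {A B : Set Q}
    (hA : MeasurableSet A) (hB : MeasurableSet B) {Y θ c : ℝ} (hθ : 0 ≤ θ) (hc : 0 < c)
    {s : ℝ → ℝ} (hsA : ∀ x ∈ Icc 0 Y, ∀ q ∈ A, s x ≤ M.netGrowth x q)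
    (hsB : ∀ x ∈ Icc 0 Y, ∀ q ∈ B, M.netGrowth x q ≤ θ * s x - c)
    (hY : ∀ᶠ t in atTop, (μ t univ).toReal ≤ Y) (hApos : ∀ᶠ t in atTop, 0 < (μ t A).toReal) :
    Tendsto (fun t => (μ t B).toReal) atTop (𝓝 0) := by
  obtain ⟨T, hT⟩ := eventually_atTop.1 ((hY.and hApos).and (eventually_ge_atTop 0))
  have hT0 : 0 ≤ T := (hT T le_rfl).2
  have hder : ∀ {E}, MeasurableSet E → ∀ t ∈ Ici T,
      HasDerivWithinAt (fun s => (μ s E).toReal)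
        (∫ q in E, M.netGrowth (μ t univ).toReal q ∂μ t) (Ici T) t := fun hE t ht =>
    (hμ.2 t (hT0.trans ht) _ hE).mono (Ici_subset_Ici.2 hT0)
  have hX : ∀ t ≥ T, (μ t univ).toReal ∈ Icc 0 Y := fun t ht =>
    ⟨ENNReal.toReal_nonneg, (hT t ht).1.1⟩
  refine tendsto_zero_of_hasDerivWithinAt_le_mul (σ := fun t => s (μ t univ).toReal) (C := Y)
    hθ hc (hder hB) (hder hA) (fun t _ => ENNReal.toReal_nonneg) (fun t ht => (hT t ht).1.2)
    (fun t ht => ?_) (fun t ht => ?_) (fun t ht => ?_)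
  · have := hμ.1 t
    exact (ENNReal.toReal_mono (measure_ne_top _ _) (measure_mono (subset_univ A))).trans
      (hT t ht).1.1
  · have := hμ.1 t
    exact setIntegral_le_of_le_const_real hB (measure_ne_top _ _) (hsB _ (hX t ht))
      (M.integrable_netGrowth _ _).integrableOn
  · have := hμ.1 t
    exact setIntegral_ge_of_const_le_real hA (measure_ne_top _ _) (hsA _ (hX t ht))
      (M.integrable_netGrowth _ _).integrableOn

theorem exists_tendsto_measure_ball_zero_of_netGrowth_neg (hμ : IsPureSelectionSolution M μ)
    {qb : Q} (hqb : M.netGrowth 0 qb < 0) :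
    ∃ δ > 0, Tendsto (fun t => (μ t (Metric.ball qb δ)).toReal) atTop (𝓝 0) := by
  obtain ⟨δ, hδ, hnear⟩ := Metric.eventually_nhds_iff_ball.1
    ((M.continuous_netGrowth_apply 0).continuousAt.eventually_lt continuousAt_const
      (show M.netGrowth 0 qb < M.netGrowth 0 qb / 2 by linarith))
  -- with `θ = 0` and `a ≡ 1` the decay lemma is plain exponential decay
  refine ⟨δ, hδ, tendsto_zero_of_hasDerivWithinAt_le_mul (T := 0) (a := fun _ => 1) (a' := 0)
    (σ := 0) (C := 1) le_rfl (show 0 < -(M.netGrowth 0 qb / 2) by linarith)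
    (fun t ht => hμ.2 t ht _ measurableSet_ball) (fun t _ => hasDerivWithinAt_const _ _ _)
    (fun _ _ => ENNReal.toReal_nonneg) (fun _ _ => one_pos) (fun _ _ => le_rfl)
    (fun t _ => ?_) (fun _ _ => by simp)⟩
  have := hμ.1 t
  rw [Pi.zero_apply, zero_mul, zero_sub]
  exact setIntegral_le_of_le_const_real measurableSet_ball (measure_ne_top _ _)
    (fun q hq => (M.netGrowth_antitoneOn q self_mem_Ici ENNReal.toReal_nonneg
      ENNReal.toReal_nonneg).trans (by linarith [hnear q hq]))
    (M.integrable_netGrowth _ _).integrableOn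

end IsPureSelectionSolution

/-- if `q̆ ∉ [𝔔]_R` then there is `δ > 0` such that
`μ(t)(B_δ(q̆)) → 0` as `t → ∞`. -/
theorem pureSelection_extinction_around_unfit_strategy
    {Q : Type*} [MetricSpace Q] [CompactSpace Q] [MeasurableSpace Q] [BorelSpace Q]
    (M : EGTRates Q) (𝔔 𝔮 : Q) (hA : M.Assumptions 𝔔 𝔮)
    (μ : ℝ → Measure Q) (hμ : IsPureSelectionSolution M μ)
    (hsupp : (msupport (μ 0) ∩ M.fittestClass 𝔔).Nonempty)
    (qb : Q) (hqb : qb ∉ M.fittestClass 𝔔) :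
    ∃ δ : ℝ, 0 < δ ∧
      Filter.Tendsto (fun t => ((μ t) (Metric.ball qb δ)).toReal) Filter.atTop (nhds 0) := by
  obtain ⟨p, hp, hpfit⟩ := hsupp
  have hK := M.carCap_nonneg 𝔔
  have hmass : ∀ Y, M.carCap 𝔔 < Y → ∀ᶠ t in atTop, (μ t univ).toReal ≤ Y := fun Y hY =>
    hμ.eventually_totalMass_le (hK.trans_lt hY) (hA.netGrowth_neg_of_carCap_lt hY)
  have hball : ∀ δ > 0, ∀ᶠ t in atTop, 0 < (μ t (Metric.ball p δ)).toReal := fun δ hδ =>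
    eventually_atTop.2 ⟨0, fun _ => hμ.measure_toReal_pos (hK.trans_lt (lt_add_one _))
      (hA.netGrowth_neg_of_carCap_lt (lt_add_one _)) measurableSet_ball (hp δ hδ)⟩
  by_cases h1 : 1 ≤ M.R 0 𝔔
  · obtain ⟨Y, hKY, δA, hδA, δB, hδB, θ, hθ, c, hc, s, hsA, hsB⟩ :=
      hA.exists_le_sub_and_le_mul_sub h1 hpfit hqb
    exact ⟨δB, hδB, hμ.tendsto_measure_zero_of_le_mul_sub measurableSet_ball measurableSet_ball
      hθ hc hsA hsB (hmass Y hKY) (hball δA hδA)⟩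
  · obtain ⟨δ, hδ, hdecay⟩ := hμ.exists_tendsto_measure_ball_zero_of_netGrowth_neg
      ((M.netGrowth_neg_iff le_rfl).2 ((hA.R_le le_rfl qb).trans_lt (not_le.1 h1)))
    exact ⟨δ, hδ, hdecay⟩

end
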